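/- Let a : ℕ → Bool be a sequence with at least two toggle indices (i.e., there exist m₁ < m₂ with a m₁ ≠ a (m₁+1) and a m₂ ≠ a (m₂+1)). Define φ(b) for a sequence b with a least toggle index m(b) by: φ(b) holds iff (b 0 = true ↔ m(b) is even). Let a¹ and a² denote the once- and twice-shifted sequences of a. Then it is not the case that φ(a) ↔ φ(a¹) and φ(a¹) ↔ φ(a²). -/

import Mathlib

/-!
If the least toggle index `m` of `b` is positive, then `b 0 = b 1` and the shifted sequence has
least toggle index `m - 1`, so the parity property flips under the shift. If `m = 0` and the
shifted sequence also toggles at `0`, then `b 1 = !b 0` while both indices are even, so again it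
flips. Hence invariance under one shift forces `m(a) = 0 < m(a¹)`, and invariance under the
next shift forces `m(a¹) = 0`.
-/

def toggles (b : ℕ → Bool) : Set ℕ := {n | b n ≠ b (n + 1)}

lemma isLeast_toggles_shift_of_isLeast_succ {b : ℕ → Bool} {k : ℕ}
    (h : IsLeast (toggles b) (k + 1)) :
    b 0 = b 1 ∧ IsLeast (toggles fun n => b (n + 1)) k := by
  have h01 : b 0 = b 1 := by
    by_contra hne
    have := h.2 (show 0 ∈ toggles b from hne)
    omega
  refine ⟨h01, h.1, fun n hn => ?_⟩
  have := h.2 (show n + 1 ∈ toggles b from hn)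
  omega

lemma eq_zero_and_ne_zero_of_parity_iff_shift {b : ℕ → Bool} {m m' : ℕ}
    (hm : IsLeast (toggles b) m) (hm' : IsLeast (toggles fun n => b (n + 1)) m')
    (h : (b 0 = true ↔ Even m) ↔ (b 1 = true ↔ Even m')) :
    m = 0 ∧ m' ≠ 0 := by
  obtain _ | k := m
  · refine ⟨rfl, fun hm'0 => ?_⟩
    subst hm'0
    have h01 : b 0 ≠ b 1 := hm.1
    cases b 0 <;> cases b 1 <;> simp_all
  · obtain ⟨h01, hk⟩ := isLeast_toggles_shift_of_isLeast_succ hm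
    obtain rfl := hm'.unique hk
    rw [h01, Nat.even_add_one] at h
    tauto

theorem stmt3_general (a : ℕ → Bool)
    (m m' m'' : ℕ)
    (hm : IsLeast {n | a n ≠ a (n + 1)} m)
    (hm' : IsLeast {n | a (n + 1) ≠ a (n + 1 + 1)} m')
    (hm'' : IsLeast {n | a (n + 2) ≠ a (n + 2 + 1)} m'') :
    ¬ ((((a 0 = true) ↔ Even m) ↔ ((a 1 = true) ↔ Even m')) ∧
       (((a 1 = true) ↔ Even m') ↔ ((a 2 = true) ↔ Even m''))) := by
  rintro ⟨h01, h12⟩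
  exact (eq_zero_and_ne_zero_of_parity_iff_shift hm hm' h01).2
    (eq_zero_and_ne_zero_of_parity_iff_shift hm' hm'' h12).1

theorem stmt3 (a : ℕ → Bool) (m₁ m₂ : ℕ) (h12 : m₁ < m₂)
    (ht1 : a m₁ ≠ a (m₁ + 1)) (ht2 : a m₂ ≠ a (m₂ + 1))
    (m m' m'' : ℕ)
    (hm : IsLeast {n | a n ≠ a (n + 1)} m)
    (hm' : IsLeast {n | a (n + 1) ≠ a (n + 1 + 1)} m')
    (hm'' : IsLeast {n | a (n + 2) ≠ a (n + 2 + 1)} m'') :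
    ¬ ((((a 0 = true) ↔ Even m) ↔ ((a 1 = true) ↔ Even m')) ∧
       (((a 1 = true) ↔ Even m') ↔ ((a 2 = true) ↔ Even m''))) :=
  stmt3_general a m m' m'' hm hm' hm''
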